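/- arXiv:0708.1913 — 4 statements merged into one kernel-verified Lean document; each statement's English description precedes it below -/
import Mathlib

section
/- Let a : ℝ → ℝ be absolutely continuous with almost-everywhere derivative a' ∈ L^p for some 1 ≤ p < ∞. Then for every t ∈ ℝ, ‖a(· - t) - a + t·a'‖_p ≤ |t| · w_{p,a'}(|t|), where w_{p,v}(δ) = sup_{|s| ≤ δ} ‖v(· - s) - v‖_p is the L^p modulus of continuity of v. -/
/-!
Writing `a (x - t) - a x + t a' x = -t ∫₀¹ (a' (x - s t) - a' x) ds`, Minkowski's integral
inequality bounds the `L^p` norm of the right-hand side by `|t|` times the supremum over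
`s ∈ (0, 1]` of `‖a' (· - s t) - a'‖_p`, and each such shift has size `|s t| ≤ |t|`.
-/

open MeasureTheory Filter
open scoped ENNReal

section Minkowski

variable {α β E : Type*} [MeasurableSpace α] [MeasurableSpace β]
  [NormedAddCommGroup E] [NormedSpace ℝ E]
  {μ : Measure α} {ν : Measure β} [SFinite μ] [IsProbabilityMeasure ν]

theorem eLpNorm_integral_le_of_ae_eLpNorm_le {p : ℝ≥0∞} (hp1 : 1 ≤ p) (hp : p ≠ ∞)
    {F : α → β → E} (hF : AEStronglyMeasurable (Function.uncurry F) (μ.prod ν)) {C : ℝ≥0∞}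
    (hC : ∀ᵐ s ∂ν, eLpNorm (F · s) p μ ≤ C) :
    eLpNorm (fun x => ∫ s, F x s ∂ν) p μ ≤ C := by
  have hp0 : p ≠ 0 := (zero_lt_one.trans_le hp1).ne'
  set q := p.toReal
  have hq1 : 1 ≤ q := by simpa using ENNReal.toReal_mono hp hp1
  have hq0 : 0 < q := zero_lt_one.trans_le hq1
  simp only [eLpNorm_eq_eLpNorm' hp0 hp] at hC ⊢
  have jensen : ∀ᵐ x ∂μ, ‖∫ s, F x s ∂ν‖ₑ ≤ eLpNorm' (F x) q ν := by
    filter_upwards [hF.prodMk_left] with x hx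
    refine (enorm_integral_le_lintegral_enorm _).trans ?_
    simpa [eLpNorm'_eq_lintegral_enorm] using eLpNorm'_le_eLpNorm'_of_exponent_le one_pos hq1 ν hx
  rw [← ENNReal.rpow_le_rpow_iff hq0, ← lintegral_rpow_enorm_eq_rpow_eLpNorm' hq0]
  calc ∫⁻ x, ‖∫ s, F x s ∂ν‖ₑ ^ q ∂μ
      ≤ ∫⁻ x, eLpNorm' (F x) q ν ^ q ∂μ :=
        lintegral_mono_ae (jensen.mono fun x hx => by gcongr)
    _ = ∫⁻ s, ∫⁻ x, ‖F x s‖ₑ ^ q ∂μ ∂ν := by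
        simp_rw [← lintegral_rpow_enorm_eq_rpow_eLpNorm' hq0]
        exact lintegral_lintegral_swap (hF.enorm.pow_const q)
    _ = ∫⁻ s, eLpNorm' (F · s) q μ ^ q ∂ν := by
        simp_rw [lintegral_rpow_enorm_eq_rpow_eLpNorm' hq0]
    _ ≤ ∫⁻ _, C ^ q ∂ν := lintegral_mono_ae (hC.mono fun s hs => by gcongr)
    _ = C ^ q := by simp

end Minkowski

theorem MeasureTheory.LocallyIntegrable.intervalIntegrable_comp_sub_mul {E : Type*}
    [NormedAddCommGroup E] {f : ℝ → E} (hf : LocallyIntegrable f) (x t : ℝ) :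
    IntervalIntegrable (fun s => f (x - s * t)) volume 0 1 := by
  rcases eq_or_ne t 0 with rfl | ht
  · simp
  have h := (((hf.integrableOn_isCompact isCompact_uIcc).intervalIntegrable (a := x - t)
    (b := x)).comp_sub_left x).comp_mul_left (c := t)
  simpa [ht, mul_comm] using h.symm

theorem eLpNorm_comp_sub_sub_le_iSup {E : Type*} [NormedAddCommGroup E] {p : ℝ≥0∞}
    {v g : ℝ → E} (hvg : v =ᵐ[volume] g) {c δ : ℝ} (hc : |c| ≤ δ) :
    eLpNorm (fun x => g (x - c) - g x) p volume ≤
      ⨆ s : {s : ℝ // |s| ≤ δ}, eLpNorm (fun x => v (x - s.1) - v x) p volume := by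
  refine le_iSup_of_le ⟨c, hc⟩ (eLpNorm_congr_ae ?_).le
  exact ((measurePreserving_sub_right volume c).quasiMeasurePreserving.ae_eq_comp
    hvg).symm.sub hvg.symm

theorem increment_eq_integral_of_ae_eq {a a' g : ℝ → ℝ}
    (hAC : ∀ x t : ℝ, a (x + t) - a x = t * ∫ s in (0:ℝ)..1, a' (x + s * t))
    (hg : a' =ᵐ[volume] g) (x t : ℝ) :
    a (x + t) - a x = t * ∫ s in (0:ℝ)..1, g (x + s * t) := by
  rcases eq_or_ne t 0 with rfl | ht
  · simp
  simp_rw [hAC, mul_comm _ t, intervalIntegral.integral_comp_add_mul _ ht,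
    intervalIntegral.integral_congr_ae (hg.mono fun _ h _ => h)]

theorem sub_add_mul_eq_neg_mul_integral {a g : ℝ → ℝ}
    (hAC : ∀ x t : ℝ, a (x + t) - a x = t * ∫ s in (0:ℝ)..1, g (x + s * t)) {x t : ℝ}
    (hint : IntervalIntegrable (fun s => g (x - s * t)) volume 0 1) :
    a (x - t) - a x + t * g x = -t * ∫ s in (0:ℝ)..1, (g (x - s * t) - g x) := by
  have h := hAC x (-t)
  simp only [mul_neg, ← sub_eq_add_neg] at h
  rw [intervalIntegral.integral_sub hint intervalIntegrable_const, h]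
  simp only [intervalIntegral.integral_const, sub_zero, smul_eq_mul, one_mul]
  ring

/-- If `a` is absolutely continuous with a.e. derivative `a' ∈ L^p`,
then `‖a(· - t) - a + t a'‖_p ≤ |t| ⬝ w_{p,a'}(|t|)`, with `w_{p,v}` the `L^p`
modulus of continuity. -/
theorem lp_smoothness_of_absolutely_continuous
    (p : ℝ≥0∞) (hp1 : 1 ≤ p) (hp : p ≠ ⊤)
    (a a' : ℝ → ℝ)
    (hAC : ∀ x t : ℝ, a (x + t) - a x = t * ∫ s in (0:ℝ)..1, a' (x + s * t))
    (ha' : MemLp a' p (volume : Measure ℝ)) (t : ℝ) :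
    eLpNorm (fun x => a (x - t) - a x + t * a' x) p volume ≤
      ENNReal.ofReal |t| *
        ⨆ s : {s : ℝ // |s| ≤ |t|},
          eLpNorm (fun x => a' (x - s.1) - a' x) p volume := by
  -- A strongly measurable representative makes `(x, s) ↦ g (x - s t)` jointly measurable.
  obtain ⟨g, hg, hag⟩ := ha'.aestronglyMeasurable
  have hg_loc : LocallyIntegrable g := ((memLp_congr_ae hag).1 ha').locallyIntegrable hp1
  set ν := volume.restrict (Set.Ioc (0:ℝ) 1)
  have : IsProbabilityMeasure ν := ⟨by simp [ν]⟩
  have hrepr : (fun x => a (x - t) - a x + t * a' x) =ᵐ[volume]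
      fun x => -t • ∫ s, (g (x - s * t) - g x) ∂ν := by
    filter_upwards [hag] with x hx
    rw [hx, sub_add_mul_eq_neg_mul_integral (increment_eq_integral_of_ae_eq hAC hag)
      (hg_loc.intervalIntegrable_comp_sub_mul x t),
      intervalIntegral.integral_of_le zero_le_one, smul_eq_mul]
  have hshift : ∀ᵐ s ∂ν, eLpNorm (fun x => g (x - s * t) - g x) p volume ≤
      ⨆ s : {s : ℝ // |s| ≤ |t|}, eLpNorm (fun x => a' (x - s.1) - a' x) p volume := by
    filter_upwards [ae_restrict_mem measurableSet_Ioc] with s hs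
    refine eLpNorm_comp_sub_sub_le_iSup hag ?_
    rw [abs_mul]
    exact mul_le_of_le_one_left (abs_nonneg t) (abs_le.2 ⟨by linarith [hs.1], hs.2⟩)
  have hF : AEStronglyMeasurable (Function.uncurry fun x s => g (x - s * t) - g x)
      (volume.prod ν) :=
    ((hg.comp_measurable (measurable_fst.sub (measurable_snd.mul_const t))).sub
      (hg.comp_measurable measurable_fst)).aestronglyMeasurable
  calc eLpNorm (fun x => a (x - t) - a x + t * a' x) p volume
      = ‖-t‖ₑ * eLpNorm (fun x => ∫ s, (g (x - s * t) - g x) ∂ν) p volume := by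
        rw [eLpNorm_congr_ae hrepr, ← eLpNorm_const_smul]
        rfl
    _ ≤ _ := by
        rw [enorm_neg, Real.enorm_eq_ofReal_abs]
        gcongr
        exact eLpNorm_integral_le_of_ae_eLpNorm_le hp1 hp hF hshift
end

section
/- Let g : ℝ → ℝ be r-times differentiable with r-th derivative g_r ∈ L^p(ℝ) for some 1 ≤ p < ∞. Then for every t ∈ ℝ, ‖g(· + t) - g - Σ_{i=1}^r (tⁱ/i!) g_i‖_p ≤ (|t|^r / r!) · w_{p, g_r}(|t|), where g_i denotes the i-th derivative of g and w_{p, g_r} is the L^p modulus of continuity of g_r. -/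
/-!
Taylor's formula with integral remainder writes the left-hand side at `x` as
`∫₀¹ c(s) (g_r(x + s t) - g_r(x)) ds` with `c(s) = t^r (1 - s)^(r-1) / (r-1)!`, a kernel of total
mass `|t|^r / r!`. Jensen's inequality for the weight `|c|`, followed by Tonelli, bounds the `p`-th
power of the `L^p` norm by `(|t|^r / r!)^(p-1) ∫₀¹ |c(s)| ‖g_r(· + s t) - g_r‖_p^p ds`, and every
norm in this integral is at most `w_{p,g_r}(|t|)`.
-/

open MeasureTheory Set
open scoped ENNReal Nat

/-- Jensen's inequality for the weight `w`, read off from the comparison of the `L¹` and `Lᴾ`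
norms with respect to the measure `ν.withDensity w`. -/
theorem ENNReal.rpow_lintegral_mul_le {β : Type*} [MeasurableSpace β] {ν : Measure β}
    {w H : β → ℝ≥0∞} (hw : Measurable w) (hH : Measurable H) {P : ℝ} (hP : 1 ≤ P) :
    (∫⁻ s, w s * H s ∂ν) ^ P ≤ (∫⁻ s, w s ∂ν) ^ (P - 1) * ∫⁻ s, w s * H s ^ P ∂ν := by
  have hP0 : 0 < P := zero_lt_one.trans_le hP
  have key := eLpNorm'_le_eLpNorm'_mul_rpow_measure_univ (μ := ν.withDensity w) zero_lt_one hP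
    hH.aestronglyMeasurable
  simp only [eLpNorm'_eq_lintegral_enorm, enorm_eq_self, ENNReal.rpow_one, div_one,
    lintegral_withDensity_eq_lintegral_mul _ hw hH, withDensity_apply _ MeasurableSet.univ,
    Measure.restrict_univ, lintegral_withDensity_eq_lintegral_mul _ hw (hH.pow_const P)] at key
  calc (∫⁻ s, w s * H s ∂ν) ^ P
      ≤ ((∫⁻ s, w s * H s ^ P ∂ν) ^ (1 / P) * (∫⁻ s, w s ∂ν) ^ (1 - 1 / P)) ^ P :=
        ENNReal.rpow_le_rpow key hP0.le
    _ = (∫⁻ s, w s ∂ν) ^ (P - 1) * ∫⁻ s, w s * H s ^ P ∂ν := by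
        rw [ENNReal.mul_rpow_of_nonneg _ _ hP0.le, ← ENNReal.rpow_mul, ← ENNReal.rpow_mul,
          one_div_mul_cancel hP0.ne', ENNReal.rpow_one, mul_comm, sub_mul, one_mul,
          one_div_mul_cancel hP0.ne']

theorem eLpNorm_le_lintegral_mul_of_enorm_le_lintegral_mul {α β ε : Type*} [MeasurableSpace α]
    [MeasurableSpace β] [ENorm ε] {μ : Measure α} {ν : Measure β} [SFinite μ] [SFinite ν]
    {p : ℝ≥0∞} (hp1 : 1 ≤ p) (hp : p ≠ ⊤) {f : α → ε} {w : β → ℝ≥0∞} {H : α → β → ℝ≥0∞}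
    {S : ℝ≥0∞} (hw : Measurable w) (hH : Measurable (Function.uncurry H))
    (hf : ∀ x, ‖f x‖ₑ ≤ ∫⁻ s, w s * H x s ∂ν) (hS : ∀ᵐ s ∂ν, eLpNorm (H · s) p μ ≤ S) :
    eLpNorm f p μ ≤ (∫⁻ s, w s ∂ν) * S := by
  set P := p.toReal
  have hP : 1 ≤ P := by simpa using ENNReal.toReal_mono hp hp1
  have hP0 : 0 < P := zero_lt_one.trans_le hP
  have hp0 : p ≠ 0 := (zero_lt_one.trans_le hp1).ne'
  set C := ∫⁻ s, w s ∂ν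
  have hS' : ∀ᵐ s ∂ν, ∫⁻ x, H x s ^ P ∂μ ≤ S ^ P := by
    filter_upwards [hS] with s hs
    rwa [eLpNorm_eq_lintegral_rpow_enorm_toReal hp0 hp, one_div, ENNReal.rpow_inv_le_iff hP0] at hs
  rw [eLpNorm_eq_lintegral_rpow_enorm_toReal hp0 hp, one_div, ENNReal.rpow_inv_le_iff hP0]
  calc ∫⁻ x, ‖f x‖ₑ ^ P ∂μ
      ≤ ∫⁻ x, (∫⁻ s, w s * H x s ∂ν) ^ P ∂μ := by gcongr with x; exact hf x
    _ ≤ ∫⁻ x, C ^ (P - 1) * ∫⁻ s, w s * H x s ^ P ∂ν ∂μ := by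
        gcongr with x
        exact ENNReal.rpow_lintegral_mul_le hw hH.of_uncurry_left hP
    _ = C ^ (P - 1) * ∫⁻ s, w s * ∫⁻ x, H x s ^ P ∂μ ∂ν := by
        rw [lintegral_const_mul _ ?_, lintegral_lintegral_swap ?_]
        · congr 1
          exact lintegral_congr fun s => lintegral_const_mul _ (hH.of_uncurry_right.pow_const _)
        · exact ((hw.comp measurable_snd).mul (hH.pow_const _)).aemeasurable
        · exact ((hw.comp measurable_snd).mul (hH.pow_const _)).lintegral_prod_right'
    _ ≤ C ^ (P - 1) * ∫⁻ s, w s * S ^ P ∂ν := by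
        gcongr 1
        exact lintegral_mono_ae (hS'.mono fun s hs => by gcongr)
    _ = (C * S) ^ P := by
        rw [lintegral_mul_const _ hw, ENNReal.mul_rpow_of_nonneg _ _ hP0.le, ← mul_assoc]
        congr 1
        conv_rhs => rw [← sub_add_cancel P 1]
        rw [ENNReal.rpow_add_of_nonneg _ _ (by linarith) zero_le_one, ENNReal.rpow_one]

theorem MeasureTheory.LocallyIntegrable.intervalIntegrable_comp_add_mul {E : Type*}
    [NormedAddCommGroup E] {G : ℝ → E} (hG : LocallyIntegrable G) (x t a b : ℝ) :
    IntervalIntegrable (fun s => G (x + s * t)) volume a b := by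
  rcases eq_or_ne t 0 with rfl | ht
  · simp
  have hG' : IntervalIntegrable G volume (x + a * t) (x + b * t) :=
    (hG.integrableOn_isCompact isCompact_uIcc).intervalIntegrable
  simpa [ht] using (hG'.comp_add_left x).comp_mul_right (c := t)

theorem hasDerivAt_taylorWithinEval_univ {E : Type*} [NormedAddCommGroup E] [NormedSpace ℝ E]
    {f : ℝ → E} {n : ℕ} (hf : ContDiff ℝ n f) (hf' : Differentiable ℝ (iteratedDeriv n f))
    (x y : ℝ) :
    HasDerivAt (fun y => taylorWithinEval f n univ y x)
      (((n ! : ℝ)⁻¹ * (x - y) ^ n) • iteratedDeriv (n + 1) f y) y := by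
  have hf'' : DifferentiableWithinAt ℝ (iteratedDerivWithin n f univ) univ y := by
    simpa [iteratedDerivWithin_univ] using hf'.differentiableAt.differentiableWithinAt
  simpa [iteratedDerivWithin_univ] using hasDerivWithinAt_taylorWithinEval (x := x)
    uniqueDiffOn_univ Filter.univ_mem (mem_univ y) subset_rfl hf.contDiffOn hf''

theorem taylorWithinEval_univ_add (f : ℝ → ℝ) (n : ℕ) (x t : ℝ) :
    taylorWithinEval f n univ x (x + t) =
      f x + ∑ i ∈ Finset.Icc 1 n, t ^ i / i ! * iteratedDeriv i f x := by
  rw [taylor_within_apply, Finset.range_eq_Ico, Finset.sum_eq_sum_Ico_succ_bot n.add_one_pos,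
    zero_add, Finset.Ico_add_one_right_eq_Icc]
  simp [iteratedDerivWithin_univ, div_eq_inv_mul]

theorem sub_taylorWithinEval_succ_eq_integral {g : ℝ → ℝ} {n : ℕ}
    (hdiff : ∀ i ≤ n, Differentiable ℝ (iteratedDeriv i g))
    (hG : LocallyIntegrable (iteratedDeriv (n + 1) g)) (x t : ℝ) :
    g (x + t) - taylorWithinEval g (n + 1) univ x (x + t) =
      ∫ s in 0..1, t ^ (n + 1) * (1 - s) ^ n / n ! *
        (iteratedDeriv (n + 1) g (x + s * t) - iteratedDeriv (n + 1) g x) := by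
  set G := iteratedDeriv (n + 1) g
  have hg : ContDiff ℝ n g :=
    contDiff_of_differentiable_iteratedDeriv fun m hm => hdiff m (by exact_mod_cast hm)
  -- `Φ 1 = g (x + t)`, and `Φ 0` is the Taylor polynomial of order `n + 1`.
  let Φ : ℝ → ℝ := fun s => taylorWithinEval g n univ (x + s * t) (x + t) +
    (((n + 1 : ℝ) * n !)⁻¹ * ((1 - s) * t) ^ (n + 1)) * G x
  have hΦ : ∀ s, HasDerivAt Φ (t ^ (n + 1) * (1 - s) ^ n / n ! * (G (x + s * t) - G x)) s := by
    intro s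
    have hpath : HasDerivAt (fun s : ℝ => x + s * t) t s := by
      simpa using ((hasDerivAt_id s).mul_const t).const_add x
    have hT := (hasDerivAt_taylorWithinEval_univ hg (hdiff n le_rfl) (x + t) (x + s * t)).comp
      s hpath
    have hR := ((((hasDerivAt_id s).const_sub 1).mul_const t).pow (n + 1)).const_mul
      ((n + 1 : ℝ) * n !)⁻¹ |>.mul_const (G x)
    refine (hT.add hR).congr_deriv ?_
    rw [show x + t - (x + s * t) = (1 - s) * t by ring]
    simp only [smul_eq_mul, id, mul_pow, Nat.add_sub_cancel, Nat.cast_succ, G]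
    field_simp
    ring
  have hint : IntervalIntegrable
      (fun s => t ^ (n + 1) * (1 - s) ^ n / n ! * (G (x + s * t) - G x)) volume 0 1 :=
    ((hG.intervalIntegrable_comp_add_mul x t 0 1).sub intervalIntegrable_const).continuousOn_mul
      (by fun_prop)
  rw [intervalIntegral.integral_eq_sub_of_hasDerivAt (fun s _ => hΦ s) hint]
  simp [Φ, taylorWithinEval_succ, taylorWithinEval_self, iteratedDerivWithin_univ, G]

theorem lintegral_enorm_taylor_kernel (n : ℕ) (t : ℝ) :
    ∫⁻ s in Ioc 0 1, ‖t ^ (n + 1) * (1 - s) ^ n / (n ! : ℝ)‖ₑ =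
      ENNReal.ofReal (|t| ^ (n + 1) / ((n + 1)! : ℝ)) := by
  have hcont : Continuous fun s : ℝ => t ^ (n + 1) * (1 - s) ^ n / (n ! : ℝ) := by fun_prop
  rw [← ofReal_integral_norm_eq_lintegral_enorm
    (hcont.integrableOn_Icc.mono_set Ioc_subset_Icc_self),
    ← intervalIntegral.integral_of_le zero_le_one]
  congr 1
  calc ∫ s in 0..1, ‖t ^ (n + 1) * (1 - s) ^ n / (n ! : ℝ)‖
      = ∫ s in 0..1, |t| ^ (n + 1) / (n ! : ℝ) * (1 - s) ^ n := by
        refine intervalIntegral.integral_congr fun s hs => ?_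
        rw [uIcc_of_le zero_le_one] at hs
        simp [abs_of_nonneg (sub_nonneg.2 hs.2), field]
    _ = |t| ^ (n + 1) / ((n + 1)! : ℝ) := by
        simp [intervalIntegral.integral_comp_sub_left (fun s => s ^ n), Nat.factorial_succ, field]

/-- `L^p` Taylor expansion of order `r`: if `g` is `r` times
differentiable with `r`-th derivative in `L^p`, then
`‖g(· + t) - g - Σ_{i=1}^r (tⁱ/i!) g_i‖_p ≤ (|t|^r/r!) w_{p,g_r}(|t|)`. -/
theorem lp_taylor_expansion_bound
    (p : ℝ≥0∞) (hp1 : 1 ≤ p) (hp : p ≠ ⊤) (r : ℕ) (hr : 1 ≤ r)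
    (g : ℝ → ℝ) (hdiff : ∀ i < r, Differentiable ℝ (iteratedDeriv i g))
    (hgr : MemLp (iteratedDeriv r g) p (volume : Measure ℝ)) (t : ℝ) :
    eLpNorm (fun x => g (x + t) - g x -
        ∑ i ∈ Finset.Icc 1 r, t ^ i / (Nat.factorial i : ℝ) * iteratedDeriv i g x)
        p volume ≤
      ENNReal.ofReal (|t| ^ r / (Nat.factorial r : ℝ)) *
        ⨆ s : {s : ℝ // |s| ≤ |t|},
          eLpNorm (fun x => iteratedDeriv r g (x - s.1) - iteratedDeriv r g x)
            p volume := by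
  obtain ⟨n, rfl⟩ : ∃ n, r = n + 1 := ⟨r - 1, by omega⟩
  have hGm : Measurable (iteratedDeriv (n + 1) g) := by
    rw [iteratedDeriv_succ]
    exact measurable_deriv _
  rw [← lintegral_enorm_taylor_kernel]
  refine eLpNorm_le_lintegral_mul_of_enorm_le_lintegral_mul (ν := volume.restrict (Ioc 0 1))
    hp1 hp (H := fun x s => ‖iteratedDeriv (n + 1) g (x + s * t) - iteratedDeriv (n + 1) g x‖ₑ)
    (by fun_prop) (by fun_prop) (fun x => ?_) ?_
  · rw [sub_sub, ← taylorWithinEval_univ_add,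
      sub_taylorWithinEval_succ_eq_integral (fun i hi => hdiff i (Nat.lt_succ_of_le hi))
        (hgr.locallyIntegrable hp1), intervalIntegral.integral_of_le zero_le_one]
    exact (enorm_integral_le_lintegral_enorm _).trans (lintegral_mono fun s => (enorm_mul _ _).le)
  · refine ae_restrict_of_forall_mem measurableSet_Ioc fun s hs =>
      le_iSup_of_le ⟨-(s * t), ?_⟩ ?_
    · rw [abs_neg, abs_mul, abs_of_pos hs.1]
      exact mul_le_of_le_one_left (abs_nonneg t) hs.2
    · simp [eLpNorm_enorm]
end

section
/- Let a : ℝ → ℝ be smooth of order r (r-times continuously differentiable with bounded, uniformly continuous r-th derivative a^{(r)}, satisfying the uniform Taylor bound ‖a(· + t) - a - Σ_{i=1}^r (tⁱ/i!) a^{(i)}‖_∞ ≤ (|t|^r/r!) w_{a^{(r)}}(|t|)). Let k be a kernel of type (m, 1) with m ≥ r, i.e. ∫ k = 1, ∫ tⁱ k(t) dt = 0 for 1 ≤ i ≤ m, and ∫ |t|^m |k(t)| dt < ∞. Then ‖a * k_{bₙ} - a‖_∞ = o(bₙ^r) for any bandwidth sequence bₙ → 0. -/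
set_option maxHeartbeats 1000000
open MeasureTheory Filter
open scoped ENNReal Topology

private lemma pow_abs_le_one_add (i m : ℕ) (him : i ≤ m) (t : ℝ) :
    |t| ^ i ≤ 1 + |t| ^ m := by
  rcases le_total (|t|) 1 with h | h
  · have : |t| ^ i ≤ 1 := pow_le_one₀ (abs_nonneg t) h
    nlinarith [pow_nonneg (abs_nonneg t) m]
  · have : |t| ^ i ≤ |t| ^ m := pow_le_pow_right₀ h him
    linarith

/-- if `a` is smooth of order `r` (r-times continuously differentiable
with bounded uniformly continuous `a^{(r)}` and the uniform Taylor modulus bound)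
and `k` is a kernel of type `(m,1)` with `m ≥ r`, then `‖a * k_{bₙ} - a‖_∞ = o(bₙ^r)`
for any bandwidths `bₙ → 0`. -/
theorem kernel_smoothing_sup_rate
    (r m : ℕ) (hr : 1 ≤ r) (hrm : r ≤ m)
    (a : ℝ → ℝ) (hsm : ContDiff ℝ r a)
    (hbd : ∃ C, ∀ x, |iteratedDeriv r a x| ≤ C)
    (huc : UniformContinuous (iteratedDeriv r a))
    (hTaylor : ∀ t x : ℝ,
      ENNReal.ofReal |a (x + t) - a x -
          ∑ i ∈ Finset.Icc 1 r, t ^ i / (Nat.factorial i : ℝ) * iteratedDeriv i a x| ≤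
        ENNReal.ofReal (|t| ^ r / (Nat.factorial r : ℝ)) *
          ⨆ q : {q : ℝ × ℝ // |q.1 - q.2| ≤ |t|},
            ENNReal.ofReal |iteratedDeriv r a q.1.2 - iteratedDeriv r a q.1.1|)
    (k : ℝ → ℝ) (hk1 : Integrable k (volume : Measure ℝ)) (hkint : ∫ t, k t = 1)
    (hmom : ∀ i, 1 ≤ i → i ≤ m → ∫ t, t ^ i * k t = 0)
    (hkm : Integrable (fun t => |t| ^ m * |k t|) (volume : Measure ℝ))
    (b : ℕ → ℝ) (hb : ∀ n, 0 < b n) (hb0 : Tendsto b atTop (nhds 0)) :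
    ∀ ε > 0, ∀ᶠ n in atTop, ∀ x : ℝ,
      |(∫ y, a (x - y) * (k (y / b n) / b n)) - a x| ≤ ε * b n ^ r := by
  intro ε hε
  obtain ⟨C, hC⟩ := hbd
  have hC0 : 0 ≤ C := le_trans (abs_nonneg _) (hC 0)
  have hrfac : (0 : ℝ) < (Nat.factorial r : ℝ) := by positivity
  -- remainder bound extraction from hTaylor
  have hRem : ∀ (D t x : ℝ), 0 ≤ D →
      (∀ q : ℝ × ℝ, |q.1 - q.2| ≤ |t| →
        |iteratedDeriv r a q.2 - iteratedDeriv r a q.1| ≤ D) →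
      |a (x + t) - a x -
          ∑ i ∈ Finset.Icc 1 r, t ^ i / (Nat.factorial i : ℝ) * iteratedDeriv i a x| ≤
        |t| ^ r / (Nat.factorial r : ℝ) * D := by
    intro D t x hD hq
    have h1 := hTaylor t x
    have h2 : (⨆ q : {q : ℝ × ℝ // |q.1 - q.2| ≤ |t|},
        ENNReal.ofReal |iteratedDeriv r a q.1.2 - iteratedDeriv r a q.1.1|) ≤
        ENNReal.ofReal D := by
      refine iSup_le fun q => ENNReal.ofReal_le_ofReal (hq q.1 q.2)
    have h3 := h1.trans (mul_le_mul_right h2 _)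
    rw [← ENNReal.ofReal_mul (by positivity)] at h3
    exact (ENNReal.ofReal_le_ofReal_iff (by positivity)).1 h3
  -- global modulus bound
  have hq2C : ∀ t : ℝ, ∀ q : ℝ × ℝ, |q.1 - q.2| ≤ |t| →
      |iteratedDeriv r a q.2 - iteratedDeriv r a q.1| ≤ 2 * C := by
    intro t q _
    have := hC q.1; have := hC q.2
    have := abs_sub (iteratedDeriv r a q.2) (iteratedDeriv r a q.1)
    calc |iteratedDeriv r a q.2 - iteratedDeriv r a q.1|
        ≤ |iteratedDeriv r a q.2| + |iteratedDeriv r a q.1| := abs_sub _ _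
      _ ≤ 2 * C := by linarith [hC q.1, hC q.2]
  -- integrability of |t|^i |k t| and t^i k t for i ≤ m
  have hmaj : Integrable (fun t : ℝ => (1 + |t| ^ m) * |k t|) volume := by
    have h := hk1.abs.add hkm
    refine h.congr ?_
    filter_upwards with t
    simp only [Pi.add_apply]
    ring
  have hkmeas := hk1.aestronglyMeasurable
  have habsk : AEStronglyMeasurable (fun t : ℝ => |k t|) volume := hk1.abs.aestronglyMeasurable
  have hint_abs : ∀ i, i ≤ m → Integrable (fun t : ℝ => |t| ^ i * |k t|) volume := by
    intro i him
    refine hmaj.mono ?_ ?_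
    · exact ((continuous_abs.pow i).aestronglyMeasurable.mul habsk)
    · filter_upwards with t
      have h1 := pow_abs_le_one_add i m him t
      have h2 : (0:ℝ) ≤ |t| ^ i * |k t| := by positivity
      rw [Real.norm_eq_abs, Real.norm_eq_abs, abs_of_nonneg h2]
      have : |t| ^ i * |k t| ≤ (1 + |t| ^ m) * |k t| :=
        mul_le_mul_of_nonneg_right h1 (abs_nonneg _)
      calc |t| ^ i * |k t| ≤ (1 + |t| ^ m) * |k t| := this
        _ ≤ abs ((1 + |t| ^ m) * |k t|) := le_abs_self _
  have hint_tk : ∀ i, i ≤ m → Integrable (fun t : ℝ => t ^ i * k t) volume := by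
    intro i him
    refine (hint_abs i him).mono ?_ ?_
    · exact ((continuous_pow i).aestronglyMeasurable.mul hkmeas)
    · filter_upwards with t
      rw [Real.norm_eq_abs, Real.norm_eq_abs, abs_mul, abs_pow]
      exact le_abs_self _
  set Kr : ℝ := ∫ t, |t| ^ r * |k t| with hKr
  have hKr0 : 0 ≤ Kr := integral_nonneg fun t => by positivity
  -- choose ε1 and δ
  set ε1 : ℝ := ε * (Nat.factorial r : ℝ) / (2 * (Kr + 1)) with hε1
  have hε1pos : 0 < ε1 := by positivity
  obtain ⟨δ, hδpos, hδ⟩ := Metric.uniformContinuous_iff.1 huc ε1 hε1pos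
  -- tail integrals
  set T : ℕ → ℝ := fun n => ∫ t, Set.indicator {t : ℝ | δ / b n ≤ |t|}
      (fun t => |t| ^ r * |k t|) t with hT
  have hmeasS : ∀ n, MeasurableSet {t : ℝ | δ / b n ≤ |t|} := by
    intro n
    exact measurableSet_le measurable_const continuous_abs.measurable
  have hTtend : Tendsto T atTop (𝓝 0) := by
    have hdiv : Tendsto (fun n => δ / b n) atTop atTop := by
      have h1 : Tendsto b atTop (𝓝[>] (0:ℝ)) :=
        tendsto_nhdsWithin_of_tendsto_nhds_of_eventually_within _ hb0
          (Eventually.of_forall fun n => hb n)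
      simpa [div_eq_mul_inv] using (h1.inv_tendsto_nhdsGT_zero.const_mul_atTop hδpos)
    have := MeasureTheory.tendsto_integral_of_dominated_convergence
      (F := fun n t => Set.indicator {t : ℝ | δ / b n ≤ |t|} (fun t => |t| ^ r * |k t|) t)
      (f := fun _ : ℝ => (0:ℝ)) (bound := fun t => |t| ^ r * |k t|)
      (fun n => ((hint_abs r (le_trans hrm (le_refl m))).aestronglyMeasurable).indicator (hmeasS n))
      (hint_abs r hrm)
      (fun n => by
        filter_upwards with t
        by_cases h : t ∈ {t : ℝ | δ / b n ≤ |t|}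
        · rw [Set.indicator_of_mem h, Real.norm_eq_abs, abs_of_nonneg (by positivity)]
        · rw [Set.indicator_of_notMem h]; simp; positivity)
      (by
        filter_upwards with t
        have : ∀ᶠ n in atTop, |t| < δ / b n := hdiv.eventually_gt_atTop _
        refine tendsto_const_nhds.congr' ?_
        filter_upwards [this] with n hn
        have : t ∉ {t : ℝ | δ / b n ≤ |t|} := by simp only [Set.mem_setOf_eq]; linarith
        rw [Set.indicator_of_notMem this])
    simpa using this
  -- pick N so the tail is small
  have hev : ∀ᶠ n in atTop, 2 * C * T n / (Nat.factorial r : ℝ) ≤ ε / 2 := by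
    have h2 : (0:ℝ) < ε * (Nat.factorial r : ℝ) / (2 * (2 * C + 1)) := by positivity
    filter_upwards [hTtend.eventually (gt_mem_nhds h2)] with n hn
    have hTn0 : 0 ≤ T n := by
      rw [hT]
      refine integral_nonneg fun t => Set.indicator_nonneg (fun t _ => by positivity) t
    rw [div_le_iff₀ hrfac]
    have hM0 : 0 ≤ ε * (Nat.factorial r : ℝ) / (2 * (2 * C + 1)) := by positivity
    have h5 : ε * (Nat.factorial r : ℝ) / (2 * (2 * C + 1)) * (2 * (2 * C + 1)) =
        ε * (Nat.factorial r : ℝ) := div_mul_cancel₀ _ (by positivity)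
    have h6 : 2 * C * T n ≤ 2 * C * (ε * (Nat.factorial r : ℝ) / (2 * (2 * C + 1))) :=
      mul_le_mul_of_nonneg_left hn.le (by positivity)
    nlinarith
  filter_upwards [hev] with n hn x
  set bb : ℝ := b n with hbb
  have hbpos : 0 < bb := hb n
  -- Taylor pieces
  set S : ℝ → ℝ := fun t => ∑ i ∈ Finset.Icc 1 r,
      (-(bb * t)) ^ i / (Nat.factorial i : ℝ) * iteratedDeriv i a x with hS
  set Rf : ℝ → ℝ := fun t => a (x - bb * t) - a x - S t with hRf
  have hxeq : ∀ t : ℝ, x - bb * t = x + (-(bb * t)) := fun t => by ring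
  have hRbound : ∀ (D : ℝ), 0 ≤ D → ∀ t : ℝ,
      (∀ q : ℝ × ℝ, |q.1 - q.2| ≤ |(-(bb * t))| →
        |iteratedDeriv r a q.2 - iteratedDeriv r a q.1| ≤ D) →
      |Rf t| ≤ bb ^ r * |t| ^ r / (Nat.factorial r : ℝ) * D := by
    intro D hD t hq
    have := hRem D (-(bb * t)) x hD hq
    rw [← hxeq t] at this
    have habs : |(-(bb * t))| ^ r = bb ^ r * |t| ^ r := by
      rw [abs_neg, abs_mul, abs_of_pos hbpos, mul_pow]
    rw [habs] at this
    simpa [hRf, hS] using this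
  have hRglob : ∀ t : ℝ, |Rf t| ≤ bb ^ r * |t| ^ r / (Nat.factorial r : ℝ) * (2 * C) :=
    fun t => hRbound (2 * C) (by linarith) t (hq2C _)
  have hRloc : ∀ t : ℝ, |t| < δ / bb →
      |Rf t| ≤ bb ^ r * |t| ^ r / (Nat.factorial r : ℝ) * ε1 := by
    intro t ht
    refine hRbound ε1 hε1pos.le t ?_
    intro q hqle
    have h1 : |(-(bb * t))| = bb * |t| := by rw [abs_neg, abs_mul, abs_of_pos hbpos]
    have h2 : bb * |t| < δ := by
      rw [lt_div_iff₀ hbpos] at ht; linarith [mul_comm (|t|) bb]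
    have hdist : dist q.1 q.2 < δ := by
      rw [Real.dist_eq]; rw [h1] at hqle; linarith
    have := hδ hdist
    rw [Real.dist_eq] at this
    rw [abs_sub_comm] at this
    exact this.le
  -- continuity of Rf
  have hScont : Continuous S := by
    refine continuous_finset_sum _ fun i _ => ?_
    exact (((continuous_const.mul continuous_id).neg.pow i).div_const _).mul continuous_const
  have hRcont : Continuous Rf := by
    refine Continuous.sub (Continuous.sub ?_ continuous_const) hScont
    exact hsm.continuous.comp (continuous_const.sub (continuous_const.mul continuous_id))
  -- integrabilities
  have hintRk : Integrable (fun t => Rf t * k t) volume := by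
    refine ((hint_abs r hrm).const_mul (bb ^ r / (Nat.factorial r : ℝ) * (2 * C))).mono
      (hRcont.aestronglyMeasurable.mul hkmeas) ?_
    filter_upwards with t
    rw [Real.norm_eq_abs, Real.norm_eq_abs, abs_mul]
    have h1 := hRglob t
    have h2 : |Rf t| * |k t| ≤ bb ^ r * |t| ^ r / (Nat.factorial r : ℝ) * (2 * C) * |k t| :=
      mul_le_mul_of_nonneg_right h1 (abs_nonneg _)
    calc |Rf t| * |k t| ≤ bb ^ r * |t| ^ r / (Nat.factorial r : ℝ) * (2 * C) * |k t| := h2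
      _ = bb ^ r / (Nat.factorial r : ℝ) * (2 * C) * (|t| ^ r * |k t|) := by ring
      _ ≤ abs (bb ^ r / (Nat.factorial r : ℝ) * (2 * C) * (|t| ^ r * |k t|)) := le_abs_self _
  have hintSk : Integrable (fun t => S t * k t) volume := by
    have : (fun t => S t * k t) = fun t => ∑ i ∈ Finset.Icc 1 r,
        ((-bb) ^ i / (Nat.factorial i : ℝ) * iteratedDeriv i a x) * (t ^ i * k t) := by
      funext t
      rw [hS, Finset.sum_mul]
      refine Finset.sum_congr rfl fun i _ => ?_
      ring
    rw [this]
    exact integrable_finset_sum _ fun i hi =>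
      (hint_tk i (le_trans (Finset.mem_Icc.1 hi).2 hrm)).const_mul _
  have hintak : Integrable (fun t => a x * k t) volume := hk1.const_mul _
  -- the convolution integral
  have hchg : (∫ y, a (x - y) * (k (y / bb) / bb)) = ∫ t, a (x - bb * t) * k t := by
    have h1 : (fun y => a (x - y) * (k (y / bb) / bb)) =
        fun y => (fun t => a (x - bb * t) * k t) (y / bb) / bb := by
      funext y
      have hy : bb * (y / bb) = y := by field_simp
      simp only [hy, mul_div_assoc]
    rw [h1, integral_div, MeasureTheory.Measure.integral_comp_div (fun t => a (x - bb * t) * k t) bb,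
      abs_of_pos hbpos, smul_eq_mul]
    field_simp
  have hdecomp : (fun t => a (x - bb * t) * k t) =
      fun t => a x * k t + (S t * k t + Rf t * k t) := by
    funext t
    have : a (x - bb * t) = a x + S t + Rf t := by rw [hRf]; ring
    rw [this]; ring
  have hSkzero : (∫ t, S t * k t) = 0 := by
    have h1 : (fun t => S t * k t) = fun t => ∑ i ∈ Finset.Icc 1 r,
        ((-bb) ^ i / (Nat.factorial i : ℝ) * iteratedDeriv i a x) * (t ^ i * k t) := by
      funext t
      rw [hS, Finset.sum_mul]
      refine Finset.sum_congr rfl fun i _ => ?_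
      ring
    rw [h1, integral_finset_sum _ (fun i hi =>
      (hint_tk i (le_trans (Finset.mem_Icc.1 hi).2 hrm)).const_mul _)]
    refine Finset.sum_eq_zero fun i hi => ?_
    rw [integral_const_mul, hmom i (Finset.mem_Icc.1 hi).1 (le_trans (Finset.mem_Icc.1 hi).2 hrm),
      mul_zero]
  have hsplit : (∫ t, a (x - bb * t) * k t) - a x = ∫ t, Rf t * k t := by
    have hintSR : Integrable (fun t => S t * k t + Rf t * k t) volume := hintSk.add hintRk
    rw [hdecomp, integral_add hintak hintSR, integral_add hintSk hintRk,
      integral_const_mul, hkint, mul_one, hSkzero, zero_add]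
    ring
  rw [hchg, hsplit]
  -- the bound
  have hφint : Integrable (fun t => bb ^ r / (Nat.factorial r : ℝ) *
      (ε1 * (|t| ^ r * |k t|) + 2 * C * Set.indicator {t : ℝ | δ / bb ≤ |t|}
        (fun t => |t| ^ r * |k t|) t)) volume := by
    refine Integrable.const_mul ?_ _
    exact ((hint_abs r hrm).const_mul ε1).add
      (((hint_abs r hrm).indicator (hmeasS n)).const_mul (2 * C))
  have hb1 : |∫ t, Rf t * k t| ≤ ∫ t, bb ^ r / (Nat.factorial r : ℝ) *
      (ε1 * (|t| ^ r * |k t|) + 2 * C * Set.indicator {t : ℝ | δ / bb ≤ |t|}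
        (fun t => |t| ^ r * |k t|) t) := by
    have h1 : |∫ t, Rf t * k t| ≤ ∫ t, |Rf t| * |k t| := by
      simpa [Real.norm_eq_abs, abs_mul] using
        norm_integral_le_integral_norm (μ := volume) (f := fun t => Rf t * k t)
    have hintabsRk : Integrable (fun t => |Rf t| * |k t|) volume :=
      hintRk.abs.congr (by filter_upwards with t; rw [abs_mul])
    refine h1.trans (integral_mono hintabsRk hφint ?_)
    intro t
    simp only []
    by_cases h : t ∈ {t : ℝ | δ / bb ≤ |t|}
    · rw [Set.indicator_of_mem h]
      have h2 := hRglob t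
      have h3 : |Rf t| * |k t| ≤ bb ^ r * |t| ^ r / (Nat.factorial r : ℝ) * (2 * C) * |k t| :=
        mul_le_mul_of_nonneg_right h2 (abs_nonneg _)
      have h4 : (0:ℝ) ≤ ε1 * (|t| ^ r * |k t|) := by positivity
      calc |Rf t| * |k t| ≤ bb ^ r * |t| ^ r / (Nat.factorial r : ℝ) * (2 * C) * |k t| := h3
        _ = bb ^ r / (Nat.factorial r : ℝ) * (2 * C * (|t| ^ r * |k t|)) := by ring
        _ ≤ _ := by nlinarith [mul_nonneg (by positivity : (0:ℝ) ≤ bb ^ r / (Nat.factorial r : ℝ)) h4]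
    · rw [Set.indicator_of_notMem h]
      simp only [Set.mem_setOf_eq, not_le] at h
      have h2 := hRloc t h
      have h3 : |Rf t| * |k t| ≤ bb ^ r * |t| ^ r / (Nat.factorial r : ℝ) * ε1 * |k t| :=
        mul_le_mul_of_nonneg_right h2 (abs_nonneg _)
      calc |Rf t| * |k t| ≤ bb ^ r * |t| ^ r / (Nat.factorial r : ℝ) * ε1 * |k t| := h3
        _ = bb ^ r / (Nat.factorial r : ℝ) * (ε1 * (|t| ^ r * |k t|) + 2 * C * 0) := by ring
  have hb2 : (∫ t, bb ^ r / (Nat.factorial r : ℝ) *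
      (ε1 * (|t| ^ r * |k t|) + 2 * C * Set.indicator {t : ℝ | δ / bb ≤ |t|}
        (fun t => |t| ^ r * |k t|) t)) =
      bb ^ r / (Nat.factorial r : ℝ) * (ε1 * Kr + 2 * C * T n) := by
    rw [integral_const_mul, integral_add ((hint_abs r hrm).const_mul ε1)
      (((hint_abs r hrm).indicator (hmeasS n)).const_mul (2 * C)),
      integral_const_mul, integral_const_mul, hKr, hT]
  refine (hb1.trans_eq hb2).trans ?_
  -- final arithmetic
  have hKrb : ε1 * Kr / (Nat.factorial r : ℝ) ≤ ε / 2 := by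
    rw [hε1, div_le_iff₀ hrfac]
    rw [div_mul_eq_mul_div, div_le_iff₀ (by positivity : (0:ℝ) < 2 * (Kr + 1))]
    nlinarith
  have hbpow : (0:ℝ) < bb ^ r := pow_pos hbpos r
  calc bb ^ r / (Nat.factorial r : ℝ) * (ε1 * Kr + 2 * C * T n)
      = bb ^ r * (ε1 * Kr / (Nat.factorial r : ℝ) + 2 * C * T n / (Nat.factorial r : ℝ)) := by
        ring
    _ ≤ bb ^ r * (ε / 2 + ε / 2) := by
        have := hn
        nlinarith
    _ = ε * bb ^ r := by ring
end

section
/- Let w : ℝ → ℝ be absolutely continuous with derivative w' ∈ L²(ℝ), and let X, Z, Z̄ be real random variables with E[X²] < ∞, where X is such that E[X w(x - Z)] = E[X (w(x - Z) - w(x - Z̄))] for all x. Then ∫ (E[X w(x - Z)])² dx ≤ E[X²] · ‖w'‖₂² · E[(Z - Z̄)²]. -/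
/-!
For each `x`, Cauchy–Schwarz in `ω` applied to the centred form of `E[X w(x - Z)]` bounds its
square by `E[X²] E[(w(x - Z) - w(x - Z̄))²]`. Integrating in `x` and exchanging the integrals
(Tonelli, in `ℝ≥0∞` so that no integrability is needed), it remains to bound, for fixed `ω`,
`‖w(· - Z) - w(· - Z̄)‖₂²` by `(Z - Z̄)² ‖w'‖₂²`: writing the increment of `w` as an average of
`w'` over a segment, this follows from Jensen's inequality and translation invariance of
Lebesgue measure.
-/

open MeasureTheory Set
open scoped ENNReal

section

variable {α : Type*} [MeasurableSpace α] {ν : Measure α}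

theorem lintegral_enorm_sq_eq_eLpNorm_sq (f : α → ℝ) :
    ∫⁻ a, ‖f a‖ₑ ^ 2 ∂ν = eLpNorm f 2 ν ^ 2 := by
  simpa [ENNReal.rpow_two] using
    (eLpNorm_nnreal_pow_eq_lintegral (f := f) (μ := ν) (p := 2) two_ne_zero).symm

theorem enorm_integral_mul_sq_le {f g : α → ℝ} (hf : AEStronglyMeasurable f ν)
    (hg : AEStronglyMeasurable g ν) :
    ‖∫ a, f a * g a ∂ν‖ₑ ^ 2 ≤ (∫⁻ a, ‖f a‖ₑ ^ 2 ∂ν) * ∫⁻ a, ‖g a‖ₑ ^ 2 ∂ν := by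
  have holder : eLpNorm (fun a => f a * g a) 1 ν ≤ eLpNorm f 2 ν * eLpNorm g 2 ν := by
    simpa using eLpNorm_le_eLpNorm_mul_eLpNorm'_of_norm (p := 2) (q := 2) (r := 1) hf hg
      (· * ·) 1 (.of_forall fun a => by simp [norm_mul])
  rw [lintegral_enorm_sq_eq_eLpNorm_sq, lintegral_enorm_sq_eq_eLpNorm_sq, ← mul_pow]
  gcongr
  calc ‖∫ a, f a * g a ∂ν‖ₑ ≤ ∫⁻ a, ‖f a * g a‖ₑ ∂ν := enorm_integral_le_lintegral_enorm _
    _ = eLpNorm (fun a => f a * g a) 1 ν := eLpNorm_one_eq_lintegral_enorm.symm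
    _ ≤ _ := holder

theorem enorm_integral_sq_le_lintegral_enorm_sq [IsProbabilityMeasure ν] {f : α → ℝ}
    (hf : AEStronglyMeasurable f ν) :
    ‖∫ a, f a ∂ν‖ₑ ^ 2 ≤ ∫⁻ a, ‖f a‖ₑ ^ 2 ∂ν := by
  simpa using enorm_integral_mul_sq_le hf (aestronglyMeasurable_const (b := (1 : ℝ)))

theorem integral_sq_eq_toReal_lintegral_enorm_sq {f : α → ℝ} (hf : AEStronglyMeasurable f ν) :
    ∫ a, f a ^ 2 ∂ν = (∫⁻ a, ‖f a‖ₑ ^ 2 ∂ν).toReal := by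
  rw [integral_eq_lintegral_of_nonneg_ae (.of_forall fun a => sq_nonneg (f a)) (hf.pow 2)]
  simp_rw [← enorm_pow, Real.enorm_of_nonneg (sq_nonneg _)]

theorem integral_sq_le_toReal_lintegral_enorm_sq (f : α → ℝ) :
    ∫ a, f a ^ 2 ∂ν ≤ (∫⁻ a, ‖f a‖ₑ ^ 2 ∂ν).toReal := by
  have h := norm_integral_le_lintegral_norm (μ := ν) fun a => f a ^ 2
  simp_rw [ofReal_norm, enorm_pow] at h
  exact (le_abs_self _).trans h

end

theorem mul_integral_comp_add_mul_congr_ae {g h : ℝ → ℝ} (hgh : g =ᵐ[volume] h) (x t : ℝ) :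
    t * ∫ s in (0:ℝ)..1, g (x + s * t) = t * ∫ s in (0:ℝ)..1, h (x + s * t) := by
  have substitute (f : ℝ → ℝ) : t * ∫ s in (0:ℝ)..1, f (x + s * t) = ∫ u in x..x + t, f u := by
    simp [mul_comm _ t]
  rw [substitute, substitute]
  exact intervalIntegral.integral_congr_ae (hgh.mono fun u hu _ => hu)

theorem lintegral_enorm_comp_add_sub_sq_le {w g : ℝ → ℝ} (hg : Measurable g)
    (hw : ∀ x t : ℝ, w (x + t) - w x = t * ∫ s in (0:ℝ)..1, g (x + s * t)) (t : ℝ) :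
    ∫⁻ y, ‖w (y + t) - w y‖ₑ ^ 2 ≤ ‖t‖ₑ ^ 2 * ∫⁻ y, ‖g y‖ₑ ^ 2 := by
  have pointwise (y : ℝ) :
      ‖w (y + t) - w y‖ₑ ^ 2 ≤ ‖t‖ₑ ^ 2 * ∫⁻ s in Ioc 0 1, ‖g (y + s * t)‖ₑ ^ 2 := by
    rw [hw, enorm_mul, mul_pow, intervalIntegral.integral_of_le zero_le_one]
    have : IsProbabilityMeasure (volume.restrict (Ioc (0:ℝ) 1)) := ⟨by simp⟩
    gcongr
    exact enorm_integral_sq_le_lintegral_enorm_sq (hg.comp (by fun_prop)).aestronglyMeasurable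
  calc _ ≤ ∫⁻ y, ‖t‖ₑ ^ 2 * ∫⁻ s in Ioc 0 1, ‖g (y + s * t)‖ₑ ^ 2 := lintegral_mono pointwise
    _ = ‖t‖ₑ ^ 2 * ∫⁻ s in Ioc 0 1, ∫⁻ y, ‖g (y + s * t)‖ₑ ^ 2 := by
        rw [lintegral_const_mul' _ _ (by finiteness), lintegral_lintegral_swap (by fun_prop)]
    _ = ‖t‖ₑ ^ 2 * ∫⁻ y, ‖g y‖ₑ ^ 2 := by
        simp_rw [lintegral_add_right_eq_self (fun y => ‖g y‖ₑ ^ 2)]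
        simp

theorem lintegral_enorm_integral_mul_sub_sq_le {Ω : Type*} [MeasurableSpace Ω] {μ : Measure Ω}
    [SFinite μ] {X Z Z' : Ω → ℝ} {w : ℝ → ℝ} {C : ℝ≥0∞} (hX : AEStronglyMeasurable X μ)
    (hw : Measurable w) (hZ : Measurable Z) (hZ' : Measurable Z')
    (hshift : ∀ t, ∫⁻ y, ‖w (y + t) - w y‖ₑ ^ 2 ≤ ‖t‖ₑ ^ 2 * C) :
    ∫⁻ x, ‖∫ ω, X ω * (w (x - Z ω) - w (x - Z' ω)) ∂μ‖ₑ ^ 2 ≤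
      (∫⁻ ω, ‖X ω‖ₑ ^ 2 ∂μ) * ((∫⁻ ω, ‖Z ω - Z' ω‖ₑ ^ 2 ∂μ) * C) := by
  set D : ℝ → Ω → ℝ := fun x ω => w (x - Z ω) - w (x - Z' ω)
  have hD : Measurable fun p : ℝ × Ω => ‖D p.1 p.2‖ₑ ^ 2 := by
    simp only [D]; fun_prop
  have translate (ω : Ω) : ∫⁻ x, ‖D x ω‖ₑ ^ 2 ≤ ‖Z ω - Z' ω‖ₑ ^ 2 * C := by
    rw [← lintegral_add_right_eq_self _ (Z' ω), enorm_sub_rev]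
    simpa only [D, add_sub_cancel_right, add_sub_assoc] using hshift (Z' ω - Z ω)
  calc _ ≤ ∫⁻ x, (∫⁻ ω, ‖X ω‖ₑ ^ 2 ∂μ) * ∫⁻ ω, ‖D x ω‖ₑ ^ 2 ∂μ :=
        lintegral_mono fun x => enorm_integral_mul_sq_le hX (by fun_prop)
    _ = (∫⁻ ω, ‖X ω‖ₑ ^ 2 ∂μ) * ∫⁻ ω, (∫⁻ x, ‖D x ω‖ₑ ^ 2) ∂μ := by
        have hDx : Measurable fun x => ∫⁻ ω, ‖D x ω‖ₑ ^ 2 ∂μ := hD.lintegral_prod_right'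
        rw [lintegral_const_mul _ hDx, lintegral_lintegral_swap hD.aemeasurable]
    _ ≤ (∫⁻ ω, ‖X ω‖ₑ ^ 2 ∂μ) * ∫⁻ ω, ‖Z ω - Z' ω‖ₑ ^ 2 * C ∂μ := by
        gcongr with ω
        exact translate ω
    _ = _ := by rw [lintegral_mul_const _ (by fun_prop)]

theorem centered_convolution_L2_bound_general
    {Ω : Type*} [MeasurableSpace Ω] (μ : Measure Ω) [IsProbabilityMeasure μ]
    (w w' : ℝ → ℝ) (hmw : Measurable w)
    (hAC : ∀ x t : ℝ, w (x + t) - w x = t * ∫ s in (0:ℝ)..1, w' (x + s * t))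
    (hw' : MemLp w' 2 (volume : Measure ℝ))
    (X Z Z' : Ω → ℝ) (hX : MemLp X 2 μ)
    (hmZ : Measurable Z) (hmZ' : Measurable Z')
    (hZZ : MemLp (fun ω => Z ω - Z' ω) 2 μ)
    (hkey : ∀ x : ℝ, ∫ ω, X ω * w (x - Z ω) ∂μ =
      ∫ ω, X ω * (w (x - Z ω) - w (x - Z' ω)) ∂μ) :
    ∫ x, (∫ ω, X ω * w (x - Z ω) ∂μ) ^ 2 ≤
      (∫ ω, X ω ^ 2 ∂μ) * (eLpNorm w' 2 volume).toReal ^ 2 *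
        ∫ ω, (Z ω - Z' ω) ^ 2 ∂μ := by
  -- Tonelli needs a measurable representative of the a.e.-defined `w'`.
  obtain ⟨g, hg, hgw'⟩ := hw'.aestronglyMeasurable
  have hACg (x t : ℝ) : w (x + t) - w x = t * ∫ s in (0:ℝ)..1, g (x + s * t) := by
    rw [hAC, mul_integral_comp_add_mul_congr_ae hgw']
  have hbound := lintegral_enorm_integral_mul_sub_sq_le hX.1 hmw hmZ hmZ'
    (lintegral_enorm_comp_add_sub_sq_le hg.measurable hACg)
  simp_rw [← hkey] at hbound
  rw [lintegral_enorm_sq_eq_eLpNorm_sq g, eLpNorm_congr_ae hgw'.symm] at hbound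
  have hfinite : (∫⁻ ω, ‖X ω‖ₑ ^ 2 ∂μ) * ((∫⁻ ω, ‖Z ω - Z' ω‖ₑ ^ 2 ∂μ) *
      eLpNorm w' 2 volume ^ 2) ≠ ⊤ := by
    rw [lintegral_enorm_sq_eq_eLpNorm_sq X,
      lintegral_enorm_sq_eq_eLpNorm_sq fun ω => Z ω - Z' ω]
    finiteness [hX.eLpNorm_lt_top, hZZ.eLpNorm_lt_top, hw'.eLpNorm_lt_top]
  calc _ ≤ (∫⁻ x, ‖∫ ω, X ω * w (x - Z ω) ∂μ‖ₑ ^ 2).toReal :=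
        integral_sq_le_toReal_lintegral_enorm_sq _
    _ ≤ _ := ENNReal.toReal_mono hfinite hbound
    _ = _ := by
        rw [integral_sq_eq_toReal_lintegral_enorm_sq hX.1,
          integral_sq_eq_toReal_lintegral_enorm_sq hZZ.1, ENNReal.toReal_mul,
          ENNReal.toReal_mul, ENNReal.toReal_pow]
        ring

/-- key estimate of Lemma 6: if `w` is absolutely continuous with
derivative `w' ∈ L²`, `E[X²] < ∞` and `E[X w(x - Z)] = E[X(w(x - Z) - w(x - Z̄))]`
for all `x`, then `∫ (E[X w(x - Z)])² dx ≤ E[X²] ‖w'‖₂² E[(Z - Z̄)²]`. -/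
theorem centered_convolution_L2_bound
    {Ω : Type*} [MeasurableSpace Ω] (μ : Measure Ω) [IsProbabilityMeasure μ]
    (w w' : ℝ → ℝ) (hmw : Measurable w)
    (hAC : ∀ x t : ℝ, w (x + t) - w x = t * ∫ s in (0:ℝ)..1, w' (x + s * t))
    (hw' : MemLp w' 2 (volume : Measure ℝ))
    (X Z Z' : Ω → ℝ) (hX : MemLp X 2 μ) (hmX : Measurable X)
    (hmZ : Measurable Z) (hmZ' : Measurable Z')
    (hZZ : MemLp (fun ω => Z ω - Z' ω) 2 μ)
    (hkey : ∀ x : ℝ, ∫ ω, X ω * w (x - Z ω) ∂μ =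
      ∫ ω, X ω * (w (x - Z ω) - w (x - Z' ω)) ∂μ) :
    ∫ x, (∫ ω, X ω * w (x - Z ω) ∂μ) ^ 2 ≤
      (∫ ω, X ω ^ 2 ∂μ) * (eLpNorm w' 2 volume).toReal ^ 2 *
        ∫ ω, (Z ω - Z' ω) ^ 2 ∂μ :=
  centered_convolution_L2_bound_general μ w w' hmw hAC hw' X Z Z' hX hmZ hmZ' hZZ hkey
end
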